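/- Let V be the 𝔽₇-vector space 𝔽₇[t,t₂]/(t⁷−1, t₂⁷−1) and let W be the quotient of V by the subspace spanned by the 21 elements t^a, t₂^a, and t^a·Σ_{j=1}^{7} t^j t₂^{7−j} for a = 0,…,6. Then the seven elements 0, 0, 2tt₂, 2tt₂²+2t²t₂, 2tt₂³+2t²t₂²+2t³t₂, 2tt₂⁴+2t²t₂³+2t³t₂²+2t⁴t₂, 2tt₂⁵+2t²t₂⁴+2t³t₂³+2t⁴t₂²+2t⁵t₂ have images in W spanning a subspace of dimension exactly 4. -/

import Mathlib

noncomputable section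
open MvPolynomial Finset

abbrev F7 := ZMod 7

/-- The group algebra `𝔽₇[t,t₂]/(t⁷−1, t₂⁷−1)` of `ℤ/7 × ℤ/7`. -/
abbrev V : Type :=
  MvPolynomial (Fin 2) F7 ⧸
    Ideal.span ({X 0 ^ 7 - 1, X 1 ^ 7 - 1} : Set (MvPolynomial (Fin 2) F7))

def t : V := Ideal.Quotient.mk _ (X 0)
def t₂ : V := Ideal.Quotient.mk _ (X 1)

/-- `Σ_{j=1}^{7} t^j t₂^{7−j}`. -/
def sigma : V := ∑ j ∈ range 7, t ^ (j + 1) * t₂ ^ (6 - j)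

/-- The subspace spanned by the 21 elements `t^a`, `t₂^a`, `t^a·Σ` for `a = 0,…,6`. -/
def U : Submodule F7 V :=
  Submodule.span F7 {x : V | ∃ a < 7, x = t ^ a ∨ x = t₂ ^ a ∨ x = t ^ a * sigma}

/-- The quotient `W = Q_{𝔽₇}` and the projection `π : V → W`. -/
abbrev W : Type := V ⧸ U

def π : V →ₗ[F7] W := U.mkQ

/-!
Via `t ↦ e₁`, `t₂ ↦ e₂`, `V` maps to the group algebra `𝔽₇[ℤ/7 × ℤ/7]`, so every element of `V`
has a coefficient at each point `(x, y)`. The generators of `U` are the indicators of the points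
`(a, 0)`, `(0, a)` and of the lines `x + y = a`. Hence for `k = 1, …, 4` the functional
`coeff (1, k) - coeff (k + 2, 6)`, comparing two points off the axes on the line `x + y = k + 1`,
vanishes on `U` and descends to `W`. On `2 Σ_{i=1}^{n} t^i t₂^{n+1-i}` (`n = 1, …, 4`) these four
functionals take the values `2 δ_{kn}`, so the images of these elements are independent, while for
`n = 5` the element is `2 (t⁶ Σ - t⁶ - t₂⁶) ∈ U`.
-/

abbrev G := ZMod 7 × ZMod 7

lemma single_pow_seven (g : G) : AddMonoidAlgebra.single g (1 : F7) ^ 7 = 1 := by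
  rw [AddMonoidAlgebra.single_pow, one_pow, AddMonoidAlgebra.one_def]
  congr 1
  ext <;> simp [show (7 : ZMod 7) = 0 from rfl]

def groupAlgebraGen : Fin 2 → AddMonoidAlgebra F7 G :=
  ![AddMonoidAlgebra.single (1, 0) 1, AddMonoidAlgebra.single (0, 1) 1]

lemma aeval_groupAlgebraGen_eq_zero_of_mem {p : MvPolynomial (Fin 2) F7}
    (hp : p ∈ Ideal.span ({X 0 ^ 7 - 1, X 1 ^ 7 - 1} : Set (MvPolynomial (Fin 2) F7))) :
    aeval groupAlgebraGen p = 0 := by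
  refine (Ideal.span_le.mpr ?_ : _ ≤ RingHom.ker (aeval groupAlgebraGen).toRingHom) hp
  rintro x (rfl | rfl) <;>
    simp only [SetLike.mem_coe, RingHom.mem_ker, AlgHom.toRingHom_eq_coe, RingHom.coe_coe, map_sub,
      map_pow, map_one, aeval_X, groupAlgebraGen, Matrix.cons_val_zero, Matrix.cons_val_one,
      single_pow_seven, sub_self]

def toGroupAlgebra : V →ₐ[F7] AddMonoidAlgebra F7 G :=
  Ideal.Quotient.liftₐ _ (aeval groupAlgebraGen) fun _ => aeval_groupAlgebraGen_eq_zero_of_mem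

lemma toGroupAlgebra_mk (p : MvPolynomial (Fin 2) F7) :
    toGroupAlgebra (Ideal.Quotient.mk _ p) = aeval groupAlgebraGen p := rfl

lemma toGroupAlgebra_t_pow_mul_t₂_pow (a b : ℕ) :
    toGroupAlgebra (t ^ a * t₂ ^ b) = AddMonoidAlgebra.single ((a : ZMod 7), (b : ZMod 7)) 1 := by
  simp [t, t₂, toGroupAlgebra_mk, groupAlgebraGen, AddMonoidAlgebra.single_pow,
    AddMonoidAlgebra.single_mul_single]

def coeffAt (g : G) : V →ₗ[F7] F7 :=
  (AddMonoidAlgebra.basis G F7).coord g ∘ₗ toGroupAlgebra.toLinearMap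

lemma coeffAt_t_pow_mul_t₂_pow (g : G) (a b : ℕ) :
    coeffAt g (t ^ a * t₂ ^ b) = if ((a : ZMod 7), (b : ZMod 7)) = g then 1 else 0 := by
  simp [coeffAt, toGroupAlgebra_t_pow_mul_t₂_pow, ← AddMonoidAlgebra.basis_apply,
    Finsupp.single_apply]

lemma coeffAt_t_pow (g : G) (a : ℕ) :
    coeffAt g (t ^ a) = if ((a : ZMod 7), 0) = g then 1 else 0 := by
  simpa using coeffAt_t_pow_mul_t₂_pow g a 0

lemma coeffAt_t₂_pow (g : G) (a : ℕ) :
    coeffAt g (t₂ ^ a) = if (0, (a : ZMod 7)) = g then 1 else 0 := by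
  simpa using coeffAt_t_pow_mul_t₂_pow g 0 a

lemma coeffAt_t_pow_mul_sigma (g : G) (a : ℕ) :
    coeffAt g (t ^ a * sigma) = if g.1 + g.2 = a then 1 else 0 := by
  -- the exponents `(a + j + 1, 6 - j)`, `j < 7`, run once through the line `x + y = a`
  have hline : ∀ (a : ZMod 7) (g : G), (∑ j ∈ range 7,
      if (a + ((j + 1 : ℕ) : ZMod 7), ((6 - j : ℕ) : ZMod 7)) = g then (1 : F7) else 0)
        = if g.1 + g.2 = a then 1 else 0 := by
    decide
  simp only [sigma, mul_sum, ← mul_assoc, ← pow_add, map_sum, coeffAt_t_pow_mul_t₂_pow,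
    Nat.cast_add (R := ZMod 7) a, hline]

lemma U_le_ker_coeffAt_sub {p q : G} (hp₁ : p.1 ≠ 0) (hp₂ : p.2 ≠ 0) (hq₁ : q.1 ≠ 0)
    (hq₂ : q.2 ≠ 0) (hpq : p.1 + p.2 = q.1 + q.2) :
    U ≤ LinearMap.ker (coeffAt p - coeffAt q) := by
  rw [U, Submodule.span_le]
  rintro x ⟨a, -, rfl | rfl | rfl⟩ <;>
    simp [coeffAt_t_pow, coeffAt_t₂_pow, coeffAt_t_pow_mul_sigma, hpq, Prod.ext_iff,
      hp₁.symm, hp₂.symm, hq₁.symm, hq₂.symm]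

def coeffDiff (k : ZMod 7) : V →ₗ[F7] F7 := coeffAt (1, k) - coeffAt (k + 2, 6)

lemma U_le_ker_coeffDiff {k : ZMod 7} (hk₀ : k ≠ 0) (hk₅ : k ≠ 5) :
    U ≤ LinearMap.ker (coeffDiff k) := by
  apply U_le_ker_coeffAt_sub <;> revert k <;> decide

def diagSum (n : ℕ) : V := ∑ i ∈ range n, t ^ (i + 1) * t₂ ^ (n - i)

lemma coeffDiff_diagSum (i j : Fin 4) :
    coeffDiff ((i : ℕ) + 1) (diagSum (j + 1)) = if i = j then 1 else 0 := by
  simp only [coeffDiff, diagSum, LinearMap.sub_apply, map_sum, coeffAt_t_pow_mul_t₂_pow]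
  revert i j
  decide

def coeffDiffs : W →ₗ[F7] Fin 4 → F7 :=
  U.liftQ (LinearMap.pi fun i : Fin 4 => coeffDiff ((i : ℕ) + 1)) <| by
    rw [LinearMap.ker_pi]
    exact le_iInf fun i =>
      U_le_ker_coeffDiff (by fin_cases i <;> decide) (by fin_cases i <;> decide)

lemma coeffDiffs_π_two_mul_diagSum (j : Fin 4) :
    coeffDiffs (π (2 * diagSum (j + 1))) = Pi.single j 2 := by
  ext i
  simp only [coeffDiffs, π, Submodule.mkQ_apply, Submodule.liftQ_apply, two_mul, map_add,
    Pi.add_apply, LinearMap.pi_apply, coeffDiff_diagSum, Pi.single_apply]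
  split_ifs <;> norm_num

lemma linearIndependent_π_two_mul_diagSum :
    LinearIndependent F7
      ![π (2 * diagSum 1), π (2 * diagSum 2), π (2 * diagSum 3), π (2 * diagSum 4)] := by
  have h₂ : (2 : F7) ≠ 0 := by decide
  have : Fact (Nat.Prime 7) := ⟨by norm_num⟩
  refine .of_comp coeffDiffs ?_
  have hcomp : coeffDiffs ∘ ![π (2 * diagSum 1), π (2 * diagSum 2), π (2 * diagSum 3),
      π (2 * diagSum 4)] = fun j : Fin 4 => Pi.single j (2 : F7) := by
    funext j
    fin_cases j
    exacts [coeffDiffs_π_two_mul_diagSum 0, coeffDiffs_π_two_mul_diagSum 1,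
      coeffDiffs_π_two_mul_diagSum 2, coeffDiffs_π_two_mul_diagSum 3]
  rw [hcomp]
  exact Pi.linearIndependent_single_of_ne_zero fun _ => h₂

lemma t_pow_seven : t ^ 7 = 1 := by
  rw [t, ← map_pow, ← map_one (Ideal.Quotient.mk _), Ideal.Quotient.eq]
  exact Ideal.subset_span (Set.mem_insert _ _)

lemma diagSum_five : diagSum 5 = t ^ 6 * sigma - t ^ 6 - t₂ ^ 6 := by
  simp only [diagSum, sigma, sum_range_succ, sum_range_zero]
  linear_combination
    (-(t₂ ^ 6 + t * t₂ ^ 5 + t ^ 2 * t₂ ^ 4 + t ^ 3 * t₂ ^ 3 + t ^ 4 * t₂ ^ 2 + t ^ 5 * t₂ + t ^ 6))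
      * t_pow_seven

lemma diagSum_five_mem_U : diagSum 5 ∈ U := by
  rw [diagSum_five]
  refine U.sub_mem (U.sub_mem ?_ ?_) ?_ <;> exact Submodule.subset_span ⟨6, by norm_num, by tauto⟩

lemma finrank_span_two_mul_diagSum :
    Module.finrank F7 (Submodule.span F7 ({π 0, π 0, π (2 * diagSum 1), π (2 * diagSum 2),
      π (2 * diagSum 3), π (2 * diagSum 4), π (2 * diagSum 5)} : Set W)) = 4 := by
  have : Fact (Nat.Prime 7) := ⟨by norm_num⟩
  have hind := linearIndependent_π_two_mul_diagSum
  have h₅ : π (2 * diagSum 5) = 0 := by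
    rw [π, Submodule.mkQ_apply, Submodule.Quotient.mk_eq_zero, two_mul]
    exact U.add_mem diagSum_five_mem_U diagSum_five_mem_U
  rw [map_zero, h₅]
  generalize π (2 * diagSum 1) = a, π (2 * diagSum 2) = b, π (2 * diagSum 3) = c,
    π (2 * diagSum 4) = d at hind ⊢
  have hset : ({0, 0, a, b, c, d, 0} : Set W) = insert 0 (Set.range ![a, b, c, d]) := by
    simp only [Matrix.range_cons, Matrix.range_empty, Set.union_empty, Set.singleton_union]
    ext
    simp only [Set.mem_insert_iff, Set.mem_singleton_iff]
    tauto
  rw [hset, Submodule.span_insert_zero, finrank_span_eq_card hind, Fintype.card_fin]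

set_option synthInstance.maxHeartbeats 1000000 in
theorem stmt15 :
    Module.finrank F7 (Submodule.span F7
      ({π 0, π 0, π (2 * t * t₂),
        π (2 * t * t₂ ^ 2 + 2 * t ^ 2 * t₂),
        π (2 * t * t₂ ^ 3 + 2 * t ^ 2 * t₂ ^ 2 + 2 * t ^ 3 * t₂),
        π (2 * t * t₂ ^ 4 + 2 * t ^ 2 * t₂ ^ 3 + 2 * t ^ 3 * t₂ ^ 2 + 2 * t ^ 4 * t₂),
        π (2 * t * t₂ ^ 5 + 2 * t ^ 2 * t₂ ^ 4 + 2 * t ^ 3 * t₂ ^ 3 + 2 * t ^ 4 * t₂ ^ 2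
            + 2 * t ^ 5 * t₂)} : Set W)) = 4 := by
  refine (congrArg (fun S : Set W => Module.finrank F7 (Submodule.span F7 S)) ?_).trans
    finrank_span_two_mul_diagSum
  simp only [diagSum, sum_range_succ, sum_range_zero]
  ring_nf
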